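/- Let Q be a finite acyclic quiver, γ₁ and γ₂ dimension vectors, and f₁ ∈ ℋ_{γ₁}, f₂ ∈ ℋ_{γ₂}. Then the Kontsevich–Soibelman localization sum Σ_{(S₁,…,S_n)} f₁((ω_{i,j})_{j∈S_i}) · f₂((ω_{i,j})_{j∈S̄_i}) · (∏_{a∈Q₁} ∏_{j'∈S̄_{h(a)}} ∏_{j∈S_{t(a)}} (ω_{h(a),j'} − ω_{t(a),j})) / (∏_{i∈Q₀} ∏_{j'∈S̄_i} ∏_{j∈S_i} (ω_{i,j'} − ω_{i,j})) — a priori an element of the field of rational functions in the variables ω_{i,j} (i ∈ Q₀, 1 ≤ j ≤ γ₁(i)+γ₂(i)) — is a polynomial, and for each vertex i it is symmetric in the variables ω_{i,1},…,ω_{i,γ₁(i)+γ₂(i)}; hence f₁ * f₂ ∈ ℋ_{γ₁+γ₂}. -/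

import Mathlib

open MvPolynomial
open scoped Classical

/-- A finite quiver with vertex set `Fin n`: a finite type of arrows together with
head and tail maps. -/
structure FinQuiver (n : ℕ) where
  Arr : Type
  [fintypeArr : Fintype Arr]
  hd : Arr → Fin n
  tl : Arr → Fin n

attribute [instance] FinQuiver.fintypeArr

variable {n : ℕ}

/-- `Q` is acyclic: there is no oriented cycle, i.e. no path
`a₁, …, a_{k+1}` (with `hd aₘ = tl aₘ₊₁`) whose final head equals its initial tail. -/
def FinQuiver.Acyclic (Q : FinQuiver n) : Prop :=
  ∀ (k : ℕ) (c : Fin (k + 1) → Q.Arr),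
    (∀ m : Fin k, Q.hd (c m.castSucc) = Q.tl (c m.succ)) →
    Q.hd (c (Fin.last k)) ≠ Q.tl (c 0)

/-- The Euler form `χ_Q` of the quiver `Q`. -/
def FinQuiver.euler (Q : FinQuiver n) (α β : Fin n → ℕ) : ℤ :=
  ∑ i : Fin n, (α i : ℤ) * β i - ∑ a : Q.Arr, (α (Q.tl a) : ℤ) * β (Q.hd a)

/-- The opposite antisymmetrization `⟨α,β⟩ = χ_Q(β,α) − χ_Q(α,β)`. -/
def FinQuiver.lam (Q : FinQuiver n) (α β : Fin n → ℕ) : ℤ :=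
  Q.euler β α - Q.euler α β

/-- The polynomial ring in the variables `ω_{i,j}`, `i ∈ Q₀`, `j ∈ ℕ` (0-indexed). -/
abbrev PolyQ (n : ℕ) := MvPolynomial (Fin n × ℕ) ℚ

/-- The permutation of the variables at vertex `i` induced by a permutation of `ℕ`. -/
def vertexPerm (i : Fin n) (σ : Equiv.Perm ℕ) : Fin n × ℕ → Fin n × ℕ :=
  fun p => if p.1 = i then (i, σ p.2) else p

/-- `f` is, for each vertex `i`, symmetric in the variables `ω_{i,0},…,ω_{i,γ i − 1}`. -/
def SymmIn (γ : Fin n → ℕ) (f : PolyQ n) : Prop :=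
  ∀ (i : Fin n) (σ : Equiv.Perm ℕ),
    (∀ j : ℕ, σ j ≠ j → j < γ i) → rename (vertexPerm i σ) f = f

lemma vars_smul_subset (c : ℚ) (f : PolyQ n) : (c • f).vars ⊆ f.vars := by
  rw [MvPolynomial.smul_eq_C_mul]
  refine (MvPolynomial.vars_mul _ _).trans ?_
  simp [MvPolynomial.vars_C]

/-- `ℋ_γ`: polynomials using only the variables `ω_{i,j}`, `j < γ i`, which are
symmetric at each vertex.  A `ℚ`-submodule of `PolyQ n`. -/
noncomputable def Hspace (γ : Fin n → ℕ) : Submodule ℚ (PolyQ n) where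
  carrier := {f | (∀ p ∈ f.vars, p.2 < γ p.1) ∧ SymmIn γ f}
  add_mem' := by
    rintro f g ⟨hf1, hf2⟩ ⟨hg1, hg2⟩
    refine ⟨fun p hp => ?_, fun i σ hσ => ?_⟩
    · rcases Finset.mem_union.mp (MvPolynomial.vars_add_subset f g hp) with h | h
      exacts [hf1 p h, hg1 p h]
    · rw [map_add, hf2 i σ hσ, hg2 i σ hσ]
  zero_mem' := by
    refine ⟨fun p hp => ?_, fun i σ hσ => map_zero _⟩
    simp [MvPolynomial.vars_0] at hp
  smul_mem' := by
    rintro c f ⟨hf1, hf2⟩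
    refine ⟨fun p hp => hf1 p (vars_smul_subset c f hp), fun i σ hσ => ?_⟩
    rw [map_smul, hf2 i σ hσ]

/-- Polynomials all of whose variables sit at vertex `i`. -/
noncomputable def onlyVertex (i : Fin n) : Submodule ℚ (PolyQ n) where
  carrier := {f | ∀ p ∈ f.vars, p.1 = i}
  add_mem' := by
    intro f g hf hg p hp
    rcases Finset.mem_union.mp (MvPolynomial.vars_add_subset f g hp) with h | h
    exacts [hf p h, hg p h]
  zero_mem' := by
    intro p hp
    simp [MvPolynomial.vars_0] at hp
  smul_mem' := by
    intro c f hf p hp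
    exact hf p (vars_smul_subset c f hp)

/-- `𝒜_{β,m}`: the subspace of `ℋ_{m·β}` of polynomials depending only on the
variables `ω_{i,0},…,ω_{i,m−1}` at the distinguished vertex `i`. -/
noncomputable def Aspace (β : Fin n → ℕ) (i : Fin n) (m : ℕ) : Submodule ℚ (PolyQ n) :=
  Hspace (fun v => m * β v) ⊓ onlyVertex i

/-- Substitute for the `j`-th variable at vertex `i` the variable `ω_{i,s}` where `s`
is the `j`-th element of `T i` in increasing order. -/
noncomputable def substAlong (T : Fin n → Finset ℕ) : PolyQ n →ₐ[ℚ] PolyQ n :=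
  aeval fun p : Fin n × ℕ => X (p.1, ((T p.1).sort (· ≤ ·)).getD p.2 0)

/-- The index set of the Kontsevich–Soibelman localization sum:
for each vertex, a `γ₁ i`-element subset of `{0,…,γ₁ i + γ₂ i − 1}`. -/
def shuffles (γ₁ γ₂ : Fin n → ℕ) : Finset (Fin n → Finset ℕ) :=
  Fintype.piFinset fun i => (Finset.range (γ₁ i + γ₂ i)).powerset.filter fun s => s.card = γ₁ i

def shuffleCompl (γ₁ γ₂ : Fin n → ℕ) (S : Fin n → Finset ℕ) : Fin n → Finset ℕ :=
  fun i => Finset.range (γ₁ i + γ₂ i) \ S i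

/-- The numerator factor attached to the arrow `a`:
`∏_{j' ∈ S̄_{h a}} ∏_{j ∈ S_{t a}} (ω_{h a, j'} − ω_{t a, j})`. -/
noncomputable def arrowFactor (Q : FinQuiver n) (γ₁ γ₂ : Fin n → ℕ)
    (S : Fin n → Finset ℕ) (a : Q.Arr) : PolyQ n :=
  ∏ j' ∈ shuffleCompl γ₁ γ₂ S (Q.hd a), ∏ j ∈ S (Q.tl a),
    (X (Q.hd a, j') - X (Q.tl a, j))

noncomputable def interactionNum (Q : FinQuiver n) (γ₁ γ₂ : Fin n → ℕ)
    (S : Fin n → Finset ℕ) : PolyQ n :=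
  ∏ a : Q.Arr, arrowFactor Q γ₁ γ₂ S a

noncomputable def interactionDen (γ₁ γ₂ : Fin n → ℕ) (S : Fin n → Finset ℕ) : PolyQ n :=
  ∏ i : Fin n, ∏ j' ∈ shuffleCompl γ₁ γ₂ S i, ∏ j ∈ S i, (X (i, j') - X (i, j))

/-- The Kontsevich–Soibelman localization sum, an element of the field of rational
functions (the fraction field of `PolyQ n`). -/
noncomputable def cohaMulRat (Q : FinQuiver n) (γ₁ γ₂ : Fin n → ℕ) (f₁ f₂ : PolyQ n) :
    FractionRing (PolyQ n) :=
  ∑ S ∈ shuffles γ₁ γ₂,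
    algebraMap (PolyQ n) (FractionRing (PolyQ n))
        (substAlong S f₁ * substAlong (shuffleCompl γ₁ γ₂ S) f₂ * interactionNum Q γ₁ γ₂ S) /
      algebraMap (PolyQ n) (FractionRing (PolyQ n)) (interactionDen γ₁ γ₂ S)

/-- The CoHA product `f₁ * f₂`: the unique polynomial representing the localization
sum (and `0` if the sum were not a polynomial, which never happens). -/
noncomputable def cohaMul (Q : FinQuiver n) (γ₁ γ₂ : Fin n → ℕ) (f₁ f₂ : PolyQ n) : PolyQ n :=
  if h : ∃ P : PolyQ n,
      algebraMap (PolyQ n) (FractionRing (PolyQ n)) P = cohaMulRat Q γ₁ γ₂ f₁ f₂ then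
    h.choose
  else 0

/-- Iterated, left-to-right, CoHA product of a list of dimension-vector/polynomial pairs.
Returns the total dimension vector together with the product. -/
noncomputable def cohaProd (Q : FinQuiver n) :
    List ((Fin n → ℕ) × PolyQ n) → (Fin n → ℕ) × PolyQ n
  | [] => (fun _ => 0, 1)
  | x :: xs => xs.foldl (fun acc y => (acc.1 + y.1, cohaMul Q acc.1 y.1 acc.2 y.2)) x

/-- Left-to-right CoHA product `f 0 * f 1 * ⋯ * f (r−1)` with `f u ∈ ℋ_{γ u}`. -/
noncomputable def cohaProdFin (Q : FinQuiver n) {r : ℕ} (γ : Fin r → Fin n → ℕ)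
    (f : Fin r → PolyQ n) : PolyQ n :=
  (cohaProd Q (List.ofFn fun u => (γ u, f u))).2

/-- The quiver with one vertex and no arrows. -/
def A1 : FinQuiver 1 := { Arr := Empty, hd := Empty.elim, tl := Empty.elim }

/-- `ψ_p = x₁ ^ p ∈ ℋ₁(A₁)`. -/
noncomputable def psi (p : ℕ) : PolyQ 1 := X ((0 : Fin 1), 0) ^ p

def oneDim : Fin 1 → ℕ := fun _ => 1

/-- The simple dimension vector `e_i`. -/
def simpleDim (i : Fin n) : Fin n → ℕ := fun v => if v = i then 1 else 0

/-- A subquiver of `Q`. -/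
structure Subquiver (Q : FinQuiver n) where
  verts : Finset (Fin n)
  arrows : Finset Q.Arr
  hd_mem : ∀ a ∈ arrows, Q.hd a ∈ verts
  tl_mem : ∀ a ∈ arrows, Q.tl a ∈ verts

def Subquiver.Full {Q : FinQuiver n} (Q' : Subquiver Q) : Prop :=
  ∀ a : Q.Arr, Q.hd a ∈ Q'.verts → Q.tl a ∈ Q'.verts → a ∈ Q'.arrows

/-- Adjacency in the underlying undirected graph of a subquiver. -/
def Subquiver.Adj {Q : FinQuiver n} (Q' : Subquiver Q) (x y : Fin n) : Prop :=
  ∃ a ∈ Q'.arrows, (Q.hd a = x ∧ Q.tl a = y) ∨ (Q.hd a = y ∧ Q.tl a = x)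

def Subquiver.Connected {Q : FinQuiver n} (Q' : Subquiver Q) : Prop :=
  ∀ x ∈ Q'.verts, ∀ y ∈ Q'.verts, Relation.ReflTransGen Q'.Adj x y

/-- The Euler form of the subquiver `Q'` (on `ℤ`-valued vectors). -/
def Subquiver.eulerZ {Q : FinQuiver n} (Q' : Subquiver Q) (α β : Fin n → ℤ) : ℤ :=
  ∑ i ∈ Q'.verts, α i * β i - ∑ a ∈ Q'.arrows, α (Q.tl a) * β (Q.hd a)

/-- Positive definiteness of the Tits form of `Q'` on vectors supported on `Q'`. -/
def Subquiver.PosDefTits {Q : FinQuiver n} (Q' : Subquiver Q) : Prop :=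
  ∀ β : Fin n → ℤ, (∀ i, i ∉ Q'.verts → β i = 0) → β ≠ 0 → 0 < Q'.eulerZ β β

/-- A connected full subquiver with positive definite Tits form. -/
def Subquiver.IsDynkin {Q : FinQuiver n} (Q' : Subquiver Q) : Prop :=
  Q'.Connected ∧ Q'.Full ∧ Q'.PosDefTits

/-- A positive root of `Q'`: a nonzero dimension vector supported on `Q'` with
Tits form equal to `1`. -/
def Subquiver.IsPosRoot {Q : FinQuiver n} (Q' : Subquiver Q) (β : Fin n → ℕ) : Prop :=
  (∀ i, i ∉ Q'.verts → β i = 0) ∧ β ≠ 0 ∧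
    Q'.eulerZ (fun i => (β i : ℤ)) (fun i => (β i : ℤ)) = 1

/-- A subquiver regarded as a quiver in its own right (on the ambient vertex set). -/
def Subquiver.toQuiver {Q : FinQuiver n} (Q' : Subquiver Q) : FinQuiver n :=
  { Arr := {a : Q.Arr // a ∈ Q'.arrows}, hd := fun a => Q.hd a.1, tl := fun a => Q.tl a.1 }

/-- An (ordered list) subquiver partition `𝒬• = (Q¹,…,Q^ℓ)`: nonempty connected
subquivers whose vertex sets partition `Q₀`. -/
structure SubqPartition (Q : FinQuiver n) (ℓ : ℕ) where
  part : Fin ℓ → Subquiver Q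
  nonempty' : ∀ j, (part j).verts.Nonempty
  connected' : ∀ j, (part j).Connected
  cover : ∀ i : Fin n, ∃! j, i ∈ (part j).verts

/-- The set `𝒬•₁` of arrows belonging to one of the parts. -/
noncomputable def SubqPartition.arrs {Q : FinQuiver n} {ℓ : ℕ} (P : SubqPartition Q ℓ) : Finset Q.Arr :=
  Finset.univ.biUnion fun j => (P.part j).arrows

/-- The partition is admissible and ordered: every arrow not inside a part goes from a
later part to an earlier part (head before tail). -/
def SubqPartition.Ordered {Q : FinQuiver n} {ℓ : ℕ} (P : SubqPartition Q ℓ) : Prop :=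
  ∀ a : Q.Arr, a ∉ P.arrs → ∀ i j : Fin ℓ,
    Q.hd a ∈ (P.part i).verts → Q.tl a ∈ (P.part j).verts → i < j

/-- Every part is a Dynkin subquiver. -/
def SubqPartition.Dynkin {Q : FinQuiver n} {ℓ : ℕ} (P : SubqPartition Q ℓ) : Prop :=
  ∀ j, (P.part j).IsDynkin

/-- `β : Fin r → (Fin n → ℕ)` is a Reineke-ordered enumeration of `Φ₊(𝒬•)`, with
`blk u` the part to which `β u` belongs: block-monotone, enumerating all positive roots
without repetition, and within each block `u < v → ⟨β u, β v⟩ ≥ 0`. -/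
def IsReinekeOrder {Q : FinQuiver n} {ℓ : ℕ} (P : SubqPartition Q ℓ) {r : ℕ}
    (β : Fin r → Fin n → ℕ) (blk : Fin r → Fin ℓ) : Prop :=
  Monotone blk ∧
  (∀ u, (P.part (blk u)).IsPosRoot (β u)) ∧
  Function.Injective β ∧
  (∀ j (b : Fin n → ℕ), (P.part j).IsPosRoot b → ∃ u, β u = b) ∧
  (∀ u v : Fin r, u < v → blk u = blk v → 0 ≤ Q.lam (β u) (β v))


/-! Let `m = γ₁ + γ₂` and let `Δ` be the product over the vertices `i` of the Vandermonde
determinants in `ω_{i,0}, …, ω_{i,m i - 1}`. Every denominator of the localization sum `F` is, up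
to sign, a product of distinct factors `ω_{i,k} - ω_{i,j}` of `Δ`, so `N = Δ F` is a polynomial.
A permutation of the variables at a vertex permutes the summands of `F` (this is where the symmetry
of `f₁` and `f₂` enters), so `F` is symmetric; as `Δ` is alternating, so is `N`. Hence `N` is
divisible by each of the pairwise non-associated primes `ω_{i,k} - ω_{i,j}`, hence by `Δ`, and
`F = N / Δ` is a polynomial, symmetric at each vertex, in the variables `ω_{i,j}`, `j < m i`. -/

theorem Finset.prod_dvd_of_prime_dvd {ι M : Type*} [CommMonoidWithZero M] [IsCancelMulZero M]
    {s : Finset ι} {p : ι → M} {a : M} (hp : ∀ i ∈ s, Prime (p i))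
    (hinj : ∀ i ∈ s, ∀ j ∈ s, p i ∣ p j → i = j) (hdvd : ∀ i ∈ s, p i ∣ a) :
    ∏ i ∈ s, p i ∣ a := by
  classical
  induction s using Finset.induction_on with
  | empty => simp
  | insert k s hk ih =>
    simp only [Finset.mem_insert, forall_eq_or_imp] at hp hinj hdvd
    obtain ⟨c, rfl⟩ := ih hp.2 (fun i hi j hj => hinj.2 i hi |>.2 j hj) hdvd.2
    have hndvd : ¬ p k ∣ ∏ i ∈ s, p i := fun h => by
      obtain ⟨j, hj, hkj⟩ := (hp.1.dvd_finsetProd_iff _).1 h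
      exact hk (hinj.1.2 j hj hkj ▸ hj)
    rw [Finset.prod_insert hk, mul_comm]
    exact mul_dvd_mul_left _ ((hp.1.dvd_or_dvd hdvd.1).resolve_left hndvd)

namespace MvPolynomial

variable {σ R : Type*} [CommRing R]

theorem vars_subset_vars_mul [IsDomain R] {p q : MvPolynomial σ R} (hp : p ≠ 0) :
    q.vars ⊆ (p * q).vars := by
  intro i hi
  have hq : q ≠ 0 := by rintro rfl; simp at hi
  rw [mem_vars_iff_degreeOf_ne_zero] at hi ⊢
  rw [degreeOf_mul_eq hp hq]
  omega

theorem mem_supported_of_mul_mem [IsDomain R] {s : Set σ} {p q : MvPolynomial σ R} (hp : p ≠ 0)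
    (h : p * q ∈ supported R s) : q ∈ supported R s := by
  classical
  rw [mem_supported] at h ⊢
  exact (Finset.coe_subset.2 (vars_subset_vars_mul hp)).trans h

theorem X_sub_X_dvd_sub_rename_update [DecidableEq σ] (a b : σ) (p : MvPolynomial σ R) :
    X a - X b ∣ p - rename (Function.update id b a) p := by
  set I := Ideal.span {(X a - X b : MvPolynomial σ R)}
  have h : (Ideal.Quotient.mkₐ R I).comp (rename (Function.update id b a)) =
      Ideal.Quotient.mkₐ R I := by
    ext s
    rcases eq_or_ne s b with rfl | hs
    · simp [Ideal.Quotient.eq, I]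
    · simp [Function.update_of_ne hs]
  rw [← Ideal.mem_span_singleton, ← Ideal.Quotient.eq]
  exact (DFunLike.congr_fun h p).symm

theorem X_sub_X_dvd_of_rename_swap_eq_neg [DecidableEq σ] [IsDomain R] [CharZero R]
    {a b : σ} {p : MvPolynomial σ R} (h : rename (Equiv.swap a b) p = -p) : X a - X b ∣ p := by
  have hcomp : Function.update id b a ∘ Equiv.swap a b = Function.update id b a := by
    funext x
    simp only [Function.comp_apply, Function.update_apply, id, Equiv.swap_apply_def]
    split_ifs <;> grind
  have h0 : rename (Function.update id b a) p = -rename (Function.update id b a) p := by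
    conv_lhs => rw [← hcomp, ← rename_rename, h, map_neg]
  simpa [self_eq_neg.1 h0] using X_sub_X_dvd_sub_rename_update a b p

theorem prime_X_sub_X [IsDomain R] {a b : σ} (hab : a ≠ b) :
    Prime (X a - X b : MvPolynomial σ R) := by
  classical
  let e := (renameEquiv R (Equiv.optionSubtypeNe a).symm).trans
    (optionEquivLeft R {c : σ // c ≠ a})
  have he : e (X a - X b) = Polynomial.X - Polynomial.C (X ⟨b, hab.symm⟩) := by
    simp [e, Equiv.optionSubtypeNe_symm_of_ne hab.symm, optionEquivLeft_X_some,
      optionEquivLeft_X_none]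
  rw [← MulEquiv.prime_iff e.toRingEquiv.toMulEquiv]
  exact he ▸ Polynomial.prime_X_sub_C _

theorem eq_and_eq_or_of_X_sub_X_dvd [Nontrivial R] [DecidableEq σ] {a b c d : σ} (hab : a ≠ b)
    (hcd : c ≠ d) (h : (X a - X b : MvPolynomial σ R) ∣ X c - X d) :
    (c = a ∧ d = b) ∨ (c = b ∧ d = a) := by
  obtain ⟨q, hq⟩ := h
  have h0 := congrArg (rename (R := R) (Function.update id b a)) hq
  simp only [map_sub, map_mul, rename_X, Function.update_self, Function.update_of_ne hab,
    id, sub_self, zero_mul, sub_eq_zero] at h0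
  have := X_injective h0
  simp only [Function.update_apply, id] at this
  split_ifs at this <;> grind

end MvPolynomial

noncomputable def sortedNth (T : Finset ℕ) (j : ℕ) : ℕ := (T.sort (· ≤ ·)).getD j 0

lemma sortedNth_mem {T : Finset ℕ} {j : ℕ} (h : j < T.card) : sortedNth T j ∈ T := by
  have hj : j < (T.sort (· ≤ ·)).length := by rwa [Finset.length_sort]
  rw [sortedNth, List.getD_eq_getElem _ _ hj]
  exact (Finset.mem_sort _).1 (List.getElem_mem hj)

lemma sortedNth_injOn (T : Finset ℕ) : Set.InjOn (sortedNth T) (Set.Iio T.card) := by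
  intro x hx y hy hxy
  have hx' : x < (T.sort (· ≤ ·)).length := by rwa [Finset.length_sort]
  have hy' : y < (T.sort (· ≤ ·)).length := by rwa [Finset.length_sort]
  rw [sortedNth, sortedNth, List.getD_eq_getElem _ _ hx', List.getD_eq_getElem _ _ hy'] at hxy
  exact (Finset.sort_nodup T (· ≤ ·)).getElem_inj_iff.1 hxy

lemma exists_sortedNth_eq {T : Finset ℕ} {x : ℕ} (hx : x ∈ T) :
    ∃ j < T.card, sortedNth T j = x := by
  obtain ⟨j, hj, hjx⟩ := List.mem_iff_getElem.1 ((Finset.mem_sort (· ≤ ·)).2 hx)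
  refine ⟨j, by rwa [Finset.length_sort] at hj, ?_⟩
  rw [sortedNth, List.getD_eq_getElem _ _ hj, hjx]

lemma substAlong_eq_rename (T : Fin n → Finset ℕ) (f : PolyQ n) :
    substAlong T f = rename (fun p => (p.1, sortedNth (T p.1) p.2)) f := by
  rw [substAlong, rename_eq_aeval]
  rfl

lemma rename_congr_of_vars {f : PolyQ n} {u u' : Fin n × ℕ → Fin n × ℕ}
    (h : ∀ p ∈ f.vars, u p = u' p) : rename u f = rename u' f :=
  hom_congr_vars (f₁ := (rename u).toRingHom) (f₂ := (rename u').toRingHom)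
    (by ext; simp) (fun p hp _ => by simp [h p hp]) rfl

lemma Equiv.Perm.exists_extend_fin {m : ℕ} (τ : Equiv.Perm (Fin m)) :
    ∃ σ : Equiv.Perm ℕ, (∀ j, σ j ≠ j → j < m) ∧ ∀ j : Fin m, σ j = τ j := by
  refine ⟨τ.extendDomain Fin.equivSubtype, fun j hj => ?_, fun j => ?_⟩
  · by_contra h
    exact hj (τ.extendDomain_apply_not_subtype Fin.equivSubtype (by simpa using h))
  · simpa [Fin.equivSubtype] using τ.extendDomain_apply_subtype Fin.equivSubtype (b := j) j.2

lemma vertexPerm_apply_self (i : Fin n) (σ : Equiv.Perm ℕ) (j : ℕ) :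
    vertexPerm i σ (i, j) = (i, σ j) := by simp [vertexPerm]

lemma vertexPerm_apply_of_ne {i v : Fin n} (σ : Equiv.Perm ℕ) (h : v ≠ i) (j : ℕ) :
    vertexPerm i σ (v, j) = (v, j) := by simp [vertexPerm, h]

lemma vertexPerm_injective (i : Fin n) (σ : Equiv.Perm ℕ) :
    Function.Injective (vertexPerm i σ) := by
  rintro ⟨v, j⟩ ⟨w, k⟩ h
  by_cases hv : v = i <;> by_cases hw : w = i <;> simp_all [vertexPerm]

lemma vertexPerm_swap (i : Fin n) (a b : ℕ) :
    vertexPerm i (Equiv.swap a b) = Equiv.swap (i, a) (i, b) := by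
  funext ⟨v, j⟩
  rcases eq_or_ne v i with rfl | hv
  · simp only [vertexPerm, Equiv.swap_apply_def, Prod.mk.injEq, true_and]
    split_ifs <;> rfl
  · rw [vertexPerm_apply_of_ne _ hv, Equiv.swap_apply_of_ne_of_ne] <;> simp [hv]

/-- `u` and `u'` differ by a permutation of the first `γ i` variables at `i`, which fixes `f`. -/
lemma rename_eq_of_mem_Hspace {γ : Fin n → ℕ} {f : PolyQ n} (hf : f ∈ Hspace γ) (i : Fin n)
    {u u' : Fin n × ℕ → Fin n × ℕ} {e e' : ℕ → ℕ}
    (hu : ∀ j, u (i, j) = (i, e j)) (hu' : ∀ j, u' (i, j) = (i, e' j))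
    (hoff : ∀ p : Fin n × ℕ, p.1 ≠ i → u p = u' p)
    (he : Set.InjOn e (Set.Iio (γ i)))
    (him : ∀ j < γ i, ∃ j' < γ i, e' j' = e j) :
    rename u f = rename u' f := by
  choose! t ht hte' using him
  have ht_inj : Function.Injective fun j : Fin (γ i) => (⟨t j, ht j j.2⟩ : Fin (γ i)) :=
    fun j₁ j₂ h => Fin.ext <| he j₁.2 j₂.2 <| by
      rw [← hte' _ j₁.2, ← hte' _ j₂.2, Fin.mk.inj_iff.1 h]
  obtain ⟨σ, hσ, hστ⟩ := Equiv.Perm.exists_extend_fin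
    (Equiv.ofBijective _ (Finite.injective_iff_bijective.1 ht_inj))
  conv_rhs => rw [← hf.2 i σ hσ, rename_rename]
  refine rename_congr_of_vars fun p hp => ?_
  obtain ⟨v, j⟩ := p
  rcases eq_or_ne v i with rfl | hv
  · have hj : j < γ v := hf.1 _ hp
    simp [vertexPerm_apply_self, hu, hu', hστ ⟨j, hj⟩, hte' j hj]
  · simp [vertexPerm_apply_of_ne σ hv, hoff (v, j) hv]

noncomputable def permAt (i : Fin n) (σ : Equiv.Perm ℕ) (S : Fin n → Finset ℕ) :
    Fin n → Finset ℕ :=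
  Function.update S i ((S i).image σ)

section PermAt

variable {i : Fin n} {σ : Equiv.Perm ℕ}

lemma prod_permAt {M : Type*} [CommMonoid M] (S : Fin n → Finset ℕ) (v : Fin n)
    (g : Fin n × ℕ → M) :
    ∏ j ∈ permAt i σ S v, g (v, j) = ∏ j ∈ S v, g (vertexPerm i σ (v, j)) := by
  rcases eq_or_ne v i with rfl | hv
  · simp [permAt, vertexPerm_apply_self, Finset.prod_image σ.injective.injOn]
  · simp [permAt, Function.update_of_ne hv, vertexPerm_apply_of_ne σ hv]

lemma permAt_symm_permAt (S : Fin n → Finset ℕ) : permAt i σ.symm (permAt i σ S) = S := by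
  funext v
  rcases eq_or_ne v i with rfl | hv
  · simp [permAt, Finset.image_image]
  · simp [permAt, Function.update_of_ne hv]

lemma Equiv.Perm.apply_lt_iff_of_support {m : ℕ} (hσ : ∀ j, σ j ≠ j → j < m) (x : ℕ) :
    σ x < m ↔ x < m := by
  by_cases h : σ x = x
  · rw [h]
  · exact iff_of_true (hσ _ fun h' => h (σ.injective h')) (hσ x h)

lemma Equiv.Perm.image_range_of_support {m : ℕ} (hσ : ∀ j, σ j ≠ j → j < m) :
    (Finset.range m).image σ = Finset.range m := by
  ext x
  simp only [Finset.mem_image, Finset.mem_range]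
  refine ⟨fun ⟨y, hy, hyx⟩ => hyx ▸ (Equiv.Perm.apply_lt_iff_of_support hσ y).2 hy, fun hx => ?_⟩
  exact ⟨σ.symm x, (Equiv.Perm.apply_lt_iff_of_support hσ _).1 (by simpa using hx), by simp⟩

variable {γ₁ γ₂ : Fin n → ℕ}

lemma mem_shuffles_iff {S : Fin n → Finset ℕ} :
    S ∈ shuffles γ₁ γ₂ ↔ ∀ i, S i ⊆ Finset.range (γ₁ i + γ₂ i) ∧ (S i).card = γ₁ i := by
  simp [shuffles]

lemma card_shuffleCompl {S : Fin n → Finset ℕ} (hS : S ∈ shuffles γ₁ γ₂) (i : Fin n) :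
    (shuffleCompl γ₁ γ₂ S i).card = γ₂ i := by
  obtain ⟨hsub, hcard⟩ := mem_shuffles_iff.1 hS i
  rw [shuffleCompl, Finset.card_sdiff_of_subset hsub, Finset.card_range, hcard]
  omega

lemma shuffleCompl_permAt (hσ : ∀ j, σ j ≠ j → j < γ₁ i + γ₂ i) (S : Fin n → Finset ℕ) :
    shuffleCompl γ₁ γ₂ (permAt i σ S) = permAt i σ (shuffleCompl γ₁ γ₂ S) := by
  funext v
  rcases eq_or_ne v i with rfl | hv
  · simp [shuffleCompl, permAt, Finset.image_sdiff _ _ σ.injective,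
      Equiv.Perm.image_range_of_support hσ]
  · simp [shuffleCompl, permAt, Function.update_of_ne hv]

lemma permAt_mem_shuffles (hσ : ∀ j, σ j ≠ j → j < γ₁ i + γ₂ i) {S : Fin n → Finset ℕ}
    (hS : S ∈ shuffles γ₁ γ₂) : permAt i σ S ∈ shuffles γ₁ γ₂ := by
  rw [mem_shuffles_iff] at hS ⊢
  intro v
  rcases eq_or_ne v i with rfl | hv
  · simp only [permAt, Function.update_self, Finset.card_image_of_injective _ σ.injective]
    refine ⟨?_, (hS v).2⟩
    rw [← Equiv.Perm.image_range_of_support hσ]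
    exact Finset.image_subset_image (hS v).1
  · simpa [permAt, Function.update_of_ne hv] using hS v

lemma rename_vertexPerm_substAlong {γ : Fin n → ℕ} {f : PolyQ n} (hf : f ∈ Hspace γ)
    {T : Fin n → Finset ℕ} (hT : (T i).card = γ i) :
    rename (vertexPerm i σ) (substAlong T f) = substAlong (permAt i σ T) f := by
  rw [substAlong_eq_rename, substAlong_eq_rename, rename_rename]
  refine rename_eq_of_mem_Hspace hf i (e := fun j => σ (sortedNth (T i) j))
    (e' := sortedNth (permAt i σ T i)) (fun j => ?_) (fun j => ?_) (fun p hp => ?_) ?_ ?_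
  · simp [vertexPerm_apply_self]
  · rfl
  · simp [vertexPerm, hp, permAt]
  · exact σ.injective.comp_injOn (hT ▸ sortedNth_injOn (T i))
  · intro j hj
    have hmem : σ (sortedNth (T i) j) ∈ permAt i σ T i := by
      simpa [permAt] using sortedNth_mem (hT ▸ hj)
    obtain ⟨j', hj', h⟩ := exists_sortedNth_eq hmem
    exact ⟨j', by simpa [permAt, Finset.card_image_of_injective _ σ.injective, hT] using hj', h⟩

lemma rename_vertexPerm_prod_prod_sub (T S : Fin n → Finset ℕ) (u v : Fin n) :
    rename (vertexPerm i σ) (∏ j' ∈ T u, ∏ j ∈ S v, (X (u, j') - X (v, j)) : PolyQ n) =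
      ∏ j' ∈ permAt i σ T u, ∏ j ∈ permAt i σ S v, (X (u, j') - X (v, j)) := by
  simp only [map_prod, map_sub, rename_X]
  refine Eq.trans ?_ (prod_permAt T u fun p => ∏ j ∈ permAt i σ S v, (X p - X (v, j))).symm
  exact Finset.prod_congr rfl fun j' _ =>
    (prod_permAt S v fun q => X (vertexPerm i σ (u, j')) - X q).symm

end PermAt

noncomputable def shuffleNum (Q : FinQuiver n) (γ₁ γ₂ : Fin n → ℕ) (f₁ f₂ : PolyQ n)
    (S : Fin n → Finset ℕ) : PolyQ n :=
  substAlong S f₁ * substAlong (shuffleCompl γ₁ γ₂ S) f₂ * interactionNum Q γ₁ γ₂ S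

lemma cohaMulRat_eq_sum (Q : FinQuiver n) (γ₁ γ₂ : Fin n → ℕ) (f₁ f₂ : PolyQ n) :
    cohaMulRat Q γ₁ γ₂ f₁ f₂ = ∑ S ∈ shuffles γ₁ γ₂,
      algebraMap (PolyQ n) (FractionRing (PolyQ n)) (shuffleNum Q γ₁ γ₂ f₁ f₂ S) /
        algebraMap (PolyQ n) (FractionRing (PolyQ n)) (interactionDen γ₁ γ₂ S) :=
  rfl

noncomputable def vertexPermFrac (i : Fin n) (σ : Equiv.Perm ℕ) :
    FractionRing (PolyQ n) →+* FractionRing (PolyQ n) :=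
  IsFractionRing.lift (g := (algebraMap (PolyQ n) _).comp (rename (vertexPerm i σ)).toRingHom)
    ((IsFractionRing.injective (PolyQ n) _).comp
      (rename_injective _ (vertexPerm_injective i σ)))

section VertexPerm

variable {i : Fin n} {σ : Equiv.Perm ℕ} {γ₁ γ₂ : Fin n → ℕ}

lemma vertexPermFrac_algebraMap (p : PolyQ n) :
    vertexPermFrac i σ (algebraMap (PolyQ n) _ p) =
      algebraMap (PolyQ n) _ (rename (vertexPerm i σ) p) :=
  IsFractionRing.lift_algebraMap _ _

lemma rename_vertexPerm_interactionNum (Q : FinQuiver n)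
    (hσ : ∀ j, σ j ≠ j → j < γ₁ i + γ₂ i) (S : Fin n → Finset ℕ) :
    rename (vertexPerm i σ) (interactionNum Q γ₁ γ₂ S) =
      interactionNum Q γ₁ γ₂ (permAt i σ S) := by
  rw [interactionNum, interactionNum, map_prod]
  refine Finset.prod_congr rfl fun a _ => ?_
  rw [arrowFactor, arrowFactor, rename_vertexPerm_prod_prod_sub, shuffleCompl_permAt hσ]

lemma rename_vertexPerm_interactionDen (hσ : ∀ j, σ j ≠ j → j < γ₁ i + γ₂ i)
    (S : Fin n → Finset ℕ) :
    rename (vertexPerm i σ) (interactionDen γ₁ γ₂ S) = interactionDen γ₁ γ₂ (permAt i σ S) := by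
  rw [interactionDen, interactionDen, map_prod]
  refine Finset.prod_congr rfl fun v _ => ?_
  rw [rename_vertexPerm_prod_prod_sub, shuffleCompl_permAt hσ]

lemma rename_vertexPerm_shuffleNum (Q : FinQuiver n) {f₁ f₂ : PolyQ n}
    (h₁ : f₁ ∈ Hspace γ₁) (h₂ : f₂ ∈ Hspace γ₂) (hσ : ∀ j, σ j ≠ j → j < γ₁ i + γ₂ i)
    {S : Fin n → Finset ℕ} (hS : S ∈ shuffles γ₁ γ₂) :
    rename (vertexPerm i σ) (shuffleNum Q γ₁ γ₂ f₁ f₂ S) =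
      shuffleNum Q γ₁ γ₂ f₁ f₂ (permAt i σ S) := by
  rw [shuffleNum, shuffleNum, map_mul, map_mul,
    rename_vertexPerm_substAlong h₁ (mem_shuffles_iff.1 hS i).2,
    rename_vertexPerm_substAlong h₂ (card_shuffleCompl hS i),
    rename_vertexPerm_interactionNum Q hσ, shuffleCompl_permAt hσ]

lemma vertexPermFrac_cohaMulRat (Q : FinQuiver n) {f₁ f₂ : PolyQ n}
    (h₁ : f₁ ∈ Hspace γ₁) (h₂ : f₂ ∈ Hspace γ₂) (hσ : ∀ j, σ j ≠ j → j < γ₁ i + γ₂ i) :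
    vertexPermFrac i σ (cohaMulRat Q γ₁ γ₂ f₁ f₂) = cohaMulRat Q γ₁ γ₂ f₁ f₂ := by
  have hσ' : ∀ j, σ.symm j ≠ j → j < γ₁ i + γ₂ i :=
    fun j h => hσ j fun h' => h (σ.symm_apply_eq.2 h'.symm)
  rw [cohaMulRat_eq_sum, map_sum]
  refine Finset.sum_nbij' (permAt i σ) (permAt i σ.symm) (fun S hS => permAt_mem_shuffles hσ hS)
    (fun S hS => permAt_mem_shuffles hσ' hS) (fun S _ => permAt_symm_permAt S)
    (fun S _ => by simpa using permAt_symm_permAt (σ := σ.symm) S) fun S hS => ?_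
  rw [map_div₀, vertexPermFrac_algebraMap, vertexPermFrac_algebraMap,
    rename_vertexPerm_shuffleNum Q h₁ h₂ hσ hS, rename_vertexPerm_interactionDen hσ]

end VertexPerm

noncomputable def vandermondeAt (i : Fin n) (m : ℕ) : PolyQ n :=
  (Matrix.vandermonde fun j : Fin m => (X (i, (j : ℕ)) : PolyQ n)).det

noncomputable def vandermondeProd (m : Fin n → ℕ) : PolyQ n := ∏ i, vandermondeAt i (m i)

section Vandermonde

variable {i : Fin n}

lemma vandermondeAt_eq_prod {m : ℕ} :
    vandermondeAt i m = ∏ j : Fin m, ∏ k ∈ Finset.Ioi j, (X (i, (k : ℕ)) - X (i, (j : ℕ))) :=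
  Matrix.det_vandermonde _

lemma rename_vandermondeAt {m : ℕ} (ρ : Fin n × ℕ → Fin n × ℕ) :
    rename ρ (vandermondeAt i m) = (Matrix.vandermonde fun j : Fin m => X (ρ (i, j))).det := by
  rw [vandermondeAt, AlgHom.map_det]
  congr 1
  ext j k
  simp [Matrix.vandermonde]

lemma rename_vertexPerm_swap_vandermondeAt {m : ℕ} {a b : Fin m} (hab : a ≠ b) :
    rename (vertexPerm i (Equiv.swap a b)) (vandermondeAt i m) = -vandermondeAt i m := by
  have hswap : (Matrix.vandermonde fun j : Fin m =>
      (X (vertexPerm i (Equiv.swap a b) (i, j)) : PolyQ n)) =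
      (Matrix.vandermonde fun j : Fin m => X (i, (j : ℕ))).submatrix (Equiv.swap a b) id := by
    ext j k
    simp only [Matrix.vandermonde, vertexPerm_apply_self, Matrix.of_apply, Matrix.submatrix_apply,
      id, Equiv.swap_apply_def, Fin.ext_iff]
    split_ifs <;> rfl
  rw [rename_vandermondeAt, hswap, Matrix.det_permute, Equiv.Perm.sign_swap hab, vandermondeAt]
  simp

lemma rename_vertexPerm_vandermondeAt_of_ne {m : ℕ} (σ : Equiv.Perm ℕ) {v : Fin n} (hv : v ≠ i) :
    rename (vertexPerm i σ) (vandermondeAt v m) = vandermondeAt v m := by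
  rw [rename_vandermondeAt]
  simp [vertexPerm_apply_of_ne σ hv, vandermondeAt]

lemma rename_vertexPerm_swap_vandermondeProd {m : Fin n → ℕ} {a b : Fin (m i)} (hab : a ≠ b) :
    rename (vertexPerm i (Equiv.swap a b)) (vandermondeProd m) = -vandermondeProd m := by
  rw [vandermondeProd, map_prod, ← Finset.mul_prod_erase _ _ (Finset.mem_univ i),
    ← Finset.mul_prod_erase _ _ (Finset.mem_univ i), rename_vertexPerm_swap_vandermondeAt hab,
    neg_mul]
  congr 2
  exact Finset.prod_congr rfl fun v hv =>
    rename_vertexPerm_vandermondeAt_of_ne _ (Finset.ne_of_mem_erase hv)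

lemma vandermondeProd_ne_zero (m : Fin n → ℕ) : vandermondeProd m ≠ 0 :=
  Finset.prod_ne_zero_iff.2 fun _ _ =>
    Matrix.det_vandermonde_ne_zero_iff.2 fun j k h => Fin.ext (by simpa using h)

lemma X_sub_X_dvd_vandermondeProd {m : Fin n → ℕ} {v : Fin n} {j k : ℕ} (hj : j < m v)
    (hk : k < m v) (hjk : j ≠ k) : X (v, j) - X (v, k) ∣ vandermondeProd m := by
  have key {j k : Fin (m v)} (h : j < k) :
      X (v, (k : ℕ)) - X (v, (j : ℕ)) ∣ vandermondeAt v (m v) := by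
    rw [vandermondeAt_eq_prod]
    exact (Finset.dvd_prod_of_mem (fun k : Fin (m v) => X (v, (k : ℕ)) - X (v, (j : ℕ)))
      (Finset.mem_Ioi.2 h)).trans (Finset.dvd_prod_of_mem (fun j : Fin (m v) =>
        ∏ k ∈ Finset.Ioi j, (X (v, (k : ℕ)) - X (v, (j : ℕ)))) (Finset.mem_univ j))
  refine Dvd.dvd.trans ?_ (Finset.dvd_prod_of_mem _ (Finset.mem_univ v))
  rcases lt_or_gt_of_ne hjk with h | h
  · simpa using (key (j := ⟨j, hj⟩) (k := ⟨k, hk⟩) h).neg_left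
  · exact key (j := ⟨k, hk⟩) (k := ⟨j, hj⟩) h

lemma vandermondeProd_dvd {m : Fin n → ℕ} {N : PolyQ n}
    (h : ∀ v, ∀ j k : Fin (m v), j < k → X (v, (k : ℕ)) - X (v, (j : ℕ)) ∣ N) :
    vandermondeProd m ∣ N := by
  have hprod : vandermondeProd m = ∏ x ∈ Finset.univ.sigma fun v =>
      Finset.univ.sigma fun j : Fin (m v) => Finset.Ioi j,
      (X (x.1, (x.2.2 : ℕ)) - X (x.1, (x.2.1 : ℕ))) := by
    simp [vandermondeProd, vandermondeAt_eq_prod, Finset.prod_sigma]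
  rw [hprod]
  refine Finset.prod_dvd_of_prime_dvd (fun x hx => prime_X_sub_X ?_) (fun x hx y hy hxy => ?_)
    fun x hx => h _ _ _ (by simpa using hx)
  · simp only [Finset.mem_sigma, Finset.mem_univ, Finset.mem_Ioi, true_and] at hx
    simp [Fin.val_eq_val, hx.ne']
  · obtain ⟨v, j, k⟩ := x
    obtain ⟨w, j', k'⟩ := y
    simp only [Finset.mem_sigma, Finset.mem_univ, Finset.mem_Ioi, true_and] at hx hy
    rcases eq_and_eq_or_of_X_sub_X_dvd (by simp [Fin.val_eq_val, hx.ne'])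
      (by simp [Fin.val_eq_val, hy.ne']) hxy with ⟨h1, h2⟩ | ⟨h1, h2⟩
    · simp only [Prod.mk.injEq] at h1 h2
      obtain ⟨rfl, hk⟩ := h1
      rw [Fin.ext h2.2, Fin.ext hk]
    · simp only [Prod.mk.injEq] at h1 h2 hx hy
      omega

end Vandermonde

lemma interactionDen_dvd_vandermondeProd {γ₁ γ₂ : Fin n → ℕ} {S : Fin n → Finset ℕ}
    (hS : S ∈ shuffles γ₁ γ₂) :
    interactionDen γ₁ γ₂ S ∣ vandermondeProd fun i => γ₁ i + γ₂ i := by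
  have hprod : interactionDen γ₁ γ₂ S = ∏ x ∈ Finset.univ.sigma fun i =>
      shuffleCompl γ₁ γ₂ S i ×ˢ S i, (X (x.1, x.2.1) - X (x.1, x.2.2)) := by
    simp [interactionDen, Finset.prod_sigma, Finset.prod_product]
  have hmem {x} (hx : x ∈ Finset.univ.sigma fun i => shuffleCompl γ₁ γ₂ S i ×ˢ S i) :
      x.2.1 < γ₁ x.1 + γ₂ x.1 ∧ x.2.2 ∈ S x.1 ∧ x.2.1 ∉ S x.1 := by
    simp only [Finset.mem_sigma, Finset.mem_univ, Finset.mem_product, shuffleCompl,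
      Finset.mem_sdiff, Finset.mem_range, true_and] at hx
    exact ⟨hx.1.1, hx.2, hx.1.2⟩
  have hne {x} (hx : x ∈ Finset.univ.sigma fun i => shuffleCompl γ₁ γ₂ S i ×ˢ S i) :
      x.2.1 ≠ x.2.2 := fun h => (hmem hx).2.2 (h ▸ (hmem hx).2.1)
  rw [hprod]
  refine Finset.prod_dvd_of_prime_dvd (fun x hx => prime_X_sub_X (by simp [hne hx]))
    (fun x hx y hy hxy => ?_) fun x hx => X_sub_X_dvd_vandermondeProd (hmem hx).1
      (Finset.mem_range.1 ((mem_shuffles_iff.1 hS _).1 (hmem hx).2.1)) (hne hx)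
  obtain ⟨v, j', j⟩ := x
  obtain ⟨w, k', k⟩ := y
  rcases eq_and_eq_or_of_X_sub_X_dvd (by simp [hne hx]) (by simp [hne hy]) hxy with
    ⟨h1, h2⟩ | ⟨h1, h2⟩ <;> simp only [Prod.mk.injEq] at h1 h2 <;> obtain ⟨rfl, rfl⟩ := h1
  · rw [h2.2]
  · exact absurd (hmem hx).2.1 (h2.2 ▸ (hmem hy).2.2)

def dimVars (γ : Fin n → ℕ) : Set (Fin n × ℕ) := {p | p.2 < γ p.1}

lemma mem_supported_dimVars {γ : Fin n → ℕ} {f : PolyQ n} :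
    f ∈ supported ℚ (dimVars γ) ↔ ∀ p ∈ f.vars, p.2 < γ p.1 := by
  rw [mem_supported]
  rfl

lemma substAlong_mem_supported {γ m : Fin n → ℕ} {f : PolyQ n} (hf : ∀ p ∈ f.vars, p.2 < γ p.1)
    {T : Fin n → Finset ℕ} (hT : ∀ i, (T i).card = γ i)
    (hTm : ∀ i, T i ⊆ Finset.range (m i)) : substAlong T f ∈ supported ℚ (dimVars m) := by
  rw [mem_supported_dimVars, substAlong_eq_rename]
  intro p hp
  obtain ⟨q, hq, rfl⟩ := Finset.mem_image.1 (vars_rename _ f hp)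
  exact Finset.mem_range.1 (hTm _ (sortedNth_mem ((hf q hq).trans_eq (hT _).symm)))

lemma shuffleNum_mem_supported (Q : FinQuiver n) {γ₁ γ₂ : Fin n → ℕ} {f₁ f₂ : PolyQ n}
    (h₁ : f₁ ∈ Hspace γ₁) (h₂ : f₂ ∈ Hspace γ₂) {S : Fin n → Finset ℕ}
    (hS : S ∈ shuffles γ₁ γ₂) :
    shuffleNum Q γ₁ γ₂ f₁ f₂ S ∈ supported ℚ (dimVars fun i => γ₁ i + γ₂ i) := by
  have hS' := mem_shuffles_iff.1 hS
  have hcompl (i : Fin n) : shuffleCompl γ₁ γ₂ S i ⊆ Finset.range (γ₁ i + γ₂ i) :=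
    Finset.sdiff_subset
  refine mul_mem (mul_mem (substAlong_mem_supported h₁.1 (fun i => (hS' i).2) fun i => (hS' i).1)
    (substAlong_mem_supported h₂.1 (card_shuffleCompl hS) hcompl)) ?_
  refine prod_mem fun a _ => prod_mem fun j' hj' => prod_mem fun j hj => sub_mem ?_ ?_
  · exact X_mem_supported.2 (Finset.mem_range.1 (hcompl _ hj'))
  · exact X_mem_supported.2 (Finset.mem_range.1 ((hS' _).1 hj))

lemma vandermondeProd_mem_supported (m : Fin n → ℕ) :
    vandermondeProd m ∈ supported ℚ (dimVars m) := by
  refine prod_mem fun i _ => ?_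
  rw [vandermondeAt_eq_prod]
  exact prod_mem fun j _ => prod_mem fun k _ =>
    sub_mem (X_mem_supported.2 k.2) (X_mem_supported.2 j.2)

lemma exists_algebraMap_eq_vandermondeProd_mul_cohaMulRat (Q : FinQuiver n)
    {γ₁ γ₂ : Fin n → ℕ} {f₁ f₂ : PolyQ n} (h₁ : f₁ ∈ Hspace γ₁) (h₂ : f₂ ∈ Hspace γ₂) :
    ∃ N ∈ supported ℚ (dimVars fun i => γ₁ i + γ₂ i),
      algebraMap (PolyQ n) (FractionRing (PolyQ n)) N =
        algebraMap (PolyQ n) _ (vandermondeProd fun i => γ₁ i + γ₂ i) *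
          cohaMulRat Q γ₁ γ₂ f₁ f₂ := by
  suffices h : _ ∈ (supported ℚ _).map (IsScalarTower.toAlgHom ℚ (PolyQ n) _) from
    Subalgebra.mem_map.1 h
  rw [cohaMulRat_eq_sum, Finset.mul_sum]
  refine Subalgebra.sum_mem _ fun S hS => Subalgebra.mem_map.2 ?_
  obtain ⟨c, hc⟩ := interactionDen_dvd_vandermondeProd hS
  have hden : interactionDen γ₁ γ₂ S ≠ 0 := left_ne_zero_of_mul (hc ▸ vandermondeProd_ne_zero _)
  refine ⟨shuffleNum Q γ₁ γ₂ f₁ f₂ S * c, mul_mem (shuffleNum_mem_supported Q h₁ h₂ hS) ?_, ?_⟩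
  · exact mem_supported_of_mul_mem hden (hc ▸ vandermondeProd_mem_supported _)
  · have : algebraMap (PolyQ n) (FractionRing (PolyQ n)) (interactionDen γ₁ γ₂ S) ≠ 0 := by
      simpa using hden
    simp only [IsScalarTower.coe_toAlgHom', hc, map_mul]
    field_simp

section Assembly

variable {Q : FinQuiver n} {γ₁ γ₂ : Fin n → ℕ} {f₁ f₂ : PolyQ n}

lemma rename_swap_eq_neg_of_algebraMap_eq (h₁ : f₁ ∈ Hspace γ₁) (h₂ : f₂ ∈ Hspace γ₂)
    {N : PolyQ n} (hN : algebraMap (PolyQ n) (FractionRing (PolyQ n)) N =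
      algebraMap (PolyQ n) _ (vandermondeProd fun i => γ₁ i + γ₂ i) * cohaMulRat Q γ₁ γ₂ f₁ f₂)
    (i : Fin n) {a b : Fin (γ₁ i + γ₂ i)} (hab : a ≠ b) :
    rename (Equiv.swap (i, (a : ℕ)) (i, (b : ℕ))) N = -N := by
  have hσ : ∀ j, Equiv.swap (a : ℕ) b j ≠ j → j < γ₁ i + γ₂ i := fun j hj => by
    rcases (Equiv.swap_apply_ne_self_iff.1 hj).2 with rfl | rfl
    exacts [a.2, b.2]
  rw [← vertexPerm_swap]
  apply IsFractionRing.injective (PolyQ n) (FractionRing (PolyQ n))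
  rw [← vertexPermFrac_algebraMap, hN, map_mul, vertexPermFrac_algebraMap,
    rename_vertexPerm_swap_vandermondeProd (m := fun i => γ₁ i + γ₂ i) hab,
    vertexPermFrac_cohaMulRat Q h₁ h₂ hσ, map_neg, map_neg, hN, neg_mul]

lemma vandermondeProd_dvd_of_algebraMap_eq (h₁ : f₁ ∈ Hspace γ₁) (h₂ : f₂ ∈ Hspace γ₂)
    {N : PolyQ n} (hN : algebraMap (PolyQ n) (FractionRing (PolyQ n)) N =
      algebraMap (PolyQ n) _ (vandermondeProd fun i => γ₁ i + γ₂ i) * cohaMulRat Q γ₁ γ₂ f₁ f₂) :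
    (vandermondeProd fun i => γ₁ i + γ₂ i) ∣ N :=
  vandermondeProd_dvd fun i _ _ hjk =>
    X_sub_X_dvd_of_rename_swap_eq_neg (rename_swap_eq_neg_of_algebraMap_eq h₁ h₂ hN i hjk.ne')

variable (Q) in
lemma exists_mem_Hspace_algebraMap_eq_cohaMulRat (h₁ : f₁ ∈ Hspace γ₁)
    (h₂ : f₂ ∈ Hspace γ₂) : ∃ P ∈ Hspace (fun i => γ₁ i + γ₂ i),
      algebraMap (PolyQ n) (FractionRing (PolyQ n)) P = cohaMulRat Q γ₁ γ₂ f₁ f₂ := by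
  obtain ⟨N, hNs, hN⟩ := exists_algebraMap_eq_vandermondeProd_mul_cohaMulRat Q h₁ h₂
  obtain ⟨P, rfl⟩ := vandermondeProd_dvd_of_algebraMap_eq h₁ h₂ hN
  have hΔ := vandermondeProd_ne_zero fun i => γ₁ i + γ₂ i
  have hP : algebraMap (PolyQ n) (FractionRing (PolyQ n)) P = cohaMulRat Q γ₁ γ₂ f₁ f₂ := by
    rw [map_mul] at hN
    exact mul_left_cancel₀ (by simpa using hΔ) hN
  refine ⟨P, ⟨mem_supported_dimVars.1 (mem_supported_of_mul_mem hΔ hNs), fun i σ hσ => ?_⟩, hP⟩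
  apply IsFractionRing.injective (PolyQ n) (FractionRing (PolyQ n))
  rw [← vertexPermFrac_algebraMap, hP, vertexPermFrac_cohaMulRat Q h₁ h₂ hσ]

lemma cohaMul_eq_of_algebraMap_eq {P : PolyQ n}
    (hP : algebraMap (PolyQ n) (FractionRing (PolyQ n)) P = cohaMulRat Q γ₁ γ₂ f₁ f₂) :
    cohaMul Q γ₁ γ₂ f₁ f₂ = P := by
  have hex : ∃ P', algebraMap (PolyQ n) (FractionRing (PolyQ n)) P' = cohaMulRat Q γ₁ γ₂ f₁ f₂ :=
    ⟨P, hP⟩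
  rw [cohaMul, dif_pos hex]
  exact IsFractionRing.injective (PolyQ n) _ (hex.choose_spec.trans hP.symm)

end Assembly

theorem coha_mul_is_polynomial_general {n : ℕ} (Q : FinQuiver n)
    (γ₁ γ₂ : Fin n → ℕ) (f₁ f₂ : PolyQ n)
    (h₁ : f₁ ∈ Hspace γ₁) (h₂ : f₂ ∈ Hspace γ₂) :
    algebraMap (PolyQ n) (FractionRing (PolyQ n)) (cohaMul Q γ₁ γ₂ f₁ f₂) =
        cohaMulRat Q γ₁ γ₂ f₁ f₂ ∧
      cohaMul Q γ₁ γ₂ f₁ f₂ ∈ Hspace (fun i => γ₁ i + γ₂ i) := by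
  obtain ⟨P, hP, hPF⟩ := exists_mem_Hspace_algebraMap_eq_cohaMulRat Q h₁ h₂
  rw [cohaMul_eq_of_algebraMap_eq hPF]
  exact ⟨hPF, hP⟩

/-- For `f₁ ∈ ℋ_{γ₁}` and `f₂ ∈ ℋ_{γ₂}` over an acyclic quiver, the
Kontsevich–Soibelman localization sum is a polynomial, symmetric at each vertex, i.e.
the CoHA product `f₁ * f₂` is a genuine polynomial lying in `ℋ_{γ₁+γ₂}`. -/
theorem coha_mul_is_polynomial {n : ℕ} (Q : FinQuiver n) (hQ : Q.Acyclic)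
    (γ₁ γ₂ : Fin n → ℕ) (f₁ f₂ : PolyQ n)
    (h₁ : f₁ ∈ Hspace γ₁) (h₂ : f₂ ∈ Hspace γ₂) :
    algebraMap (PolyQ n) (FractionRing (PolyQ n)) (cohaMul Q γ₁ γ₂ f₁ f₂) =
        cohaMulRat Q γ₁ γ₂ f₁ f₂ ∧
      cohaMul Q γ₁ γ₂ f₁ f₂ ∈ Hspace (fun i => γ₁ i + γ₂ i) :=
  coha_mul_is_polynomial_general Q γ₁ γ₂ f₁ f₂ h₁ h₂
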